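/- Let N ≥ 1, M > 0, and let x, y ∈ ℝ^N satisfy 0 ≤ x_n ≤ M and 0 ≤ y_n ≤ M for all n. Then the Hausdorff distance (in ℝ² with the Chebyshev distance) between the compact sets K_x and K_y is at most d^N(x, y) = max_n |x_n − y_n|. -/

import Mathlib

noncomputable def box (M : ℝ) (n : ℕ) : Set (ℝ × ℝ) :=
  Set.Icc (4 * M + 10 * M * (n : ℝ)) (4 * M + 10 * M * (n : ℝ) + 2 * M) ×ˢ Set.Icc (-M) M

noncomputable def pp {N : ℕ} (M : ℝ) (z : Fin N → ℝ) (n : Fin N) : ℝ × ℝ :=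
  (10 * M * ((n : ℕ) : ℝ), z n)

noncomputable def pm {N : ℕ} (M : ℝ) (z : Fin N → ℝ) (n : Fin N) : ℝ × ℝ :=
  (10 * M * ((n : ℕ) : ℝ), -(z n))

noncomputable def Kset {N : ℕ} (M : ℝ) (z : Fin N → ℝ) : Set (ℝ × ℝ) :=
  ⋃ n : Fin N, ({pp M z n, pm M z n} ∪ box M n)

theorem pp_mem {N : ℕ} (M : ℝ) (z : Fin N → ℝ) (n : Fin N) : pp M z n ∈ Kset M z :=
  Set.mem_iUnion.mpr ⟨n, Or.inl (Set.mem_insert _ _)⟩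

theorem pm_mem {N : ℕ} (M : ℝ) (z : Fin N → ℝ) (n : Fin N) : pm M z n ∈ Kset M z :=
  Set.mem_iUnion.mpr ⟨n, Or.inl (Set.mem_insert_of_mem _ rfl)⟩

theorem Kset_compact {N : ℕ} (M : ℝ) (z : Fin N → ℝ) : IsCompact (Kset M z) := by
  apply isCompact_iUnion
  intro n
  exact ((Set.toFinite _).isCompact).union (isCompact_Icc.prod isCompact_Icc)

instance {N : ℕ} (M : ℝ) (z : Fin N → ℝ) : CompactSpace ↥(Kset M z) :=
  isCompact_iff_compactSpace.mp (Kset_compact M z)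

theorem Kset_nonempty {N : ℕ} (hN : 0 < N) (M : ℝ) (z : Fin N → ℝ) : (Kset M z).Nonempty :=
  ⟨pp M z ⟨0, hN⟩, pp_mem M z ⟨0, hN⟩⟩

/-! The boxes do not depend on `z`, and the `n`-th marked points of `K_x` and `K_y` differ only
in their second coordinate, by `±(x n - y n)`. Hence every point of `K_x` lies within
`d^N(x, y)` of `K_y`, and symmetrically. -/

section

variable {N : ℕ} (M : ℝ) (x y : Fin N → ℝ) (n : Fin N)

lemma box_subset_Kset : box M n ⊆ Kset M x :=
  fun _ ha => Set.mem_iUnion.mpr ⟨n, Or.inr ha⟩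

lemma dist_pp_le : dist (pp M x n) (pp M y n) ≤ dist x y := by
  simpa [pp, Prod.dist_eq] using dist_le_pi_dist x y n

lemma dist_pm_le : dist (pm M x n) (pm M y n) ≤ dist x y := by
  simpa [pm, Prod.dist_eq] using dist_le_pi_dist x y n

lemma exists_mem_Kset_dist_le {a : ℝ × ℝ} (ha : a ∈ Kset M x) :
    ∃ b ∈ Kset M y, dist a b ≤ dist x y := by
  obtain ⟨n, (rfl | rfl) | hbox⟩ := Set.mem_iUnion.mp ha
  · exact ⟨pp M y n, pp_mem M y n, dist_pp_le M x y n⟩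
  · exact ⟨pm M y n, pm_mem M y n, dist_pm_le M x y n⟩
  · exact ⟨a, box_subset_Kset M y n hbox, by simp⟩

end

theorem hausdorffDist_Kset_le {N : ℕ} {M : ℝ}
    (x y : Fin N → ℝ) :
    Metric.hausdorffDist (Kset M x) (Kset M y) ≤ dist x y := by
  refine Metric.hausdorffDist_le_of_mem_dist dist_nonneg
    (fun a ha => exists_mem_Kset_dist_le M x y ha) (fun a ha => ?_)
  rw [dist_comm x y]
  exact exists_mem_Kset_dist_le M y x ha
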